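/- Let H be a formal variable and s > t nonnegative integers. Then in the field ℚ(H), Σ_{r=0}^{s−t} [(s−t)(s−t−1)⋯(s−t−r+1)] / [H(H−1)⋯(H−r+1)] = (H+1)/(H−s+t+1), where the r = 0 term is 1. -/

import Mathlib

/-!
Write `a_r = y(y-1)⋯(y-r+1) / (x(x-1)⋯(x-r+1))`. Since `(x - r) a_{r+1} = (y - r) a_r`, the
multiple `(x - y + 1) a_r` is the difference `c_r - c_{r+1}` of `c_r = (x - r + 1) a_r`, so the sum
telescopes to `(x + 1) - c_n`. For `y = N`, taking `n = N` and adding the last term `a_N` gives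
`(x - N + 1) ∑_{r ≤ N} a_r = x + 1`.
-/

open Finset

lemma RatFunc.X_ne_C {K : Type*} [Field K] (c : K) : (RatFunc.X : RatFunc K) ≠ RatFunc.C c := by
  rw [← RatFunc.algebraMap_X, ← RatFunc.algebraMap_C]
  exact (RatFunc.algebraMap_injective K).ne (Polynomial.X_ne_C c)

section FallingRatio

variable {F : Type*} [Field F]

def fallingRatio (y x : F) (r : ℕ) : F :=
  (∏ k ∈ range r, (y - k)) / ∏ k ∈ range r, (x - k)

lemma sub_mul_fallingRatio_succ (y x : F) (r : ℕ) (hr : x - r ≠ 0) :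
    (x - r) * fallingRatio y x (r + 1) = (y - r) * fallingRatio y x r := by
  rw [fallingRatio, fallingRatio, prod_range_succ, prod_range_succ, mul_div_assoc',
    mul_comm (x - r) (_ * _), mul_div_mul_right _ _ hr]
  ring

lemma sub_add_one_mul_sum_fallingRatio (y x : F) (n : ℕ) (hx : ∀ k < n, x - k ≠ 0) :
    (x - y + 1) * ∑ r ∈ range n, fallingRatio y x r =
      (x + 1) - (x - n + 1) * fallingRatio y x n := by
  have telescope : ∀ r < n, (x - y + 1) * fallingRatio y x r =
      (x - r + 1) * fallingRatio y x r - (x - (r + 1 : ℕ) + 1) * fallingRatio y x (r + 1) := by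
    intro r hr
    push_cast
    linear_combination sub_mul_fallingRatio_succ y x r (hx r hr)
  rw [mul_sum, sum_congr rfl fun r hr => telescope r (mem_range.1 hr), sum_range_sub']
  simp [fallingRatio]

lemma sub_add_one_mul_sum_fallingRatio_natCast (N : ℕ) (x : F) (hx : ∀ k < N, x - k ≠ 0) :
    (x - N + 1) * ∑ r ∈ range (N + 1), fallingRatio (N : F) x r = x + 1 := by
  rw [sum_range_succ, mul_add, sub_add_one_mul_sum_fallingRatio _ _ _ hx]
  ring

end FallingRatio

/-- The rational-function identity in `ℚ(H)` (with `H = X`):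
`∑_{r=0}^{s−t} (s−t)(s−t−1)⋯(s−t−r+1) / (H(H−1)⋯(H−r+1)) = (H+1)/(H−s+t+1)`
for nonnegative integers `s > t`, the `r = 0` term being `1`. -/
theorem zhelobenko_rational_identity (s t : ℕ) (h : t < s) :
    ∑ r ∈ Finset.range (s - t + 1),
        (∏ k ∈ Finset.range r, ((s : RatFunc ℚ) - (t : RatFunc ℚ) - (k : RatFunc ℚ))) /
          (∏ k ∈ Finset.range r, (RatFunc.X - (k : RatFunc ℚ))) =
      (RatFunc.X + 1) / (RatFunc.X - (s : RatFunc ℚ) + (t : RatFunc ℚ) + 1) := by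
  have hN : ((s - t : ℕ) : RatFunc ℚ) = s - t := Nat.cast_sub h.le
  have hX : ∀ q : ℚ, RatFunc.X - (q : RatFunc ℚ) ≠ 0 := fun q =>
    sub_ne_zero.2 (by simpa using RatFunc.X_ne_C q)
  have hden : RatFunc.X - (s : RatFunc ℚ) + (t : RatFunc ℚ) + 1 =
      RatFunc.X - ((s - t : ℕ) : RatFunc ℚ) + 1 := by
    rw [hN]; ring
  rw [hden, eq_div_iff (by convert hX ((s - t : ℕ) - 1) using 1; push_cast; ring), mul_comm, ← hN]
  exact sub_add_one_mul_sum_fallingRatio_natCast _ _ fun k _ => by simpa using hX k
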